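/- For all σ ≤ τ in the consecutive pattern poset, the Möbius function satisfies μ(σ,τ) ∈ {−1, 0, 1}. -/

import Mathlib

/-!
Fix `σ < τ` with `|τ| ≥ |σ| + 2`. Every proper pattern of `τ` is a pattern of `τ` minus its last
letter or of `τ` minus its first letter, and the patterns common to both are exactly those of the
interior `i(τ)` and of the exterior `x(τ)`. As the Möbius sums over the two halves vanish,
inclusion–exclusion gives `μ(σ,τ) = δ(σ,i(τ)) + μ(σ,x(τ))` when `σ ≤ x(τ) ≰ i(τ)`, and
`μ(σ,τ) = δ(σ,i(τ))` otherwise, because every proper pattern of `x(τ)` lies below `i(τ)`.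
So `μ(σ,τ)` is `0` or `1`, or `1 - 1` when `σ = i(τ)` is covered by `x(τ)`, or equals `μ(σ,x(τ))`
with `|x(τ)| < |τ|`; induction on `|τ|` finishes, covers having `μ = -1`.
-/

/-- Standardization of a list of distinct naturals: replace each entry by its rank
(the number of entries less than or equal to it). -/
def stdize (s : List ℕ) : List ℕ := s.map (fun x => (s.filter (· ≤ x)).length)

/-- All contiguous subwords (infixes) of a list. -/
def infixes (l : List ℕ) : List (List ℕ) := l.inits.flatMap List.tails

/-- `l` is a permutation of `{1,…,d}` where `d = l.length ≥ 1`; these are the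
elements of the consecutive pattern poset. -/
def IsPermList (l : List ℕ) : Prop := l ≠ [] ∧ l.Perm (List.range' 1 l.length)

/-- Consecutive pattern containment: `σ ≤ τ` iff `σ` is the standardization of
some contiguous subsequence of `τ`. -/
def PattLE (σ τ : List ℕ) : Prop := σ ∈ (infixes τ).map stdize

instance (σ τ : List ℕ) : Decidable (PattLE σ τ) :=
  inferInstanceAs (Decidable (σ ∈ (infixes τ).map stdize))

/-- A permutation is monotone if its letters strictly increase or strictly decrease. -/
def MonotoneList (l : List ℕ) : Prop := l.Chain' (· < ·) ∨ l.Chain' (· > ·)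

/-- The interior `i(τ)`: standardization of `τ` with first and last letters removed. -/
def pattInterior (τ : List ℕ) : List ℕ := stdize τ.tail.dropLast

/-- Length of the longest proper prefix of `τ` whose standardization is also the
standardization of a suffix of `τ`. -/
def extLen (τ : List ℕ) : ℕ :=
  Nat.findGreatest (fun k => stdize (τ.take k) = stdize (τ.drop (τ.length - k))) (τ.length - 1)

/-- The exterior `x(τ)`: the longest permutation that is both a proper prefix and a
suffix of `τ`. -/
def pattExterior (τ : List ℕ) : List ℕ := stdize (τ.take (extLen τ))

/-- The closed interval `[σ,τ]` in the consecutive pattern poset, as a `Finset`. -/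
def pattInterval (σ τ : List ℕ) : Finset (List ℕ) :=
  ((infixes τ).map stdize).toFinset.filter (fun z => PattLE σ z)

/-- The open interval `(σ,τ)` in the consecutive pattern poset, as a `Finset`. -/
def openPattInterval (σ τ : List ℕ) : Finset (List ℕ) :=
  ((infixes τ).map stdize).toFinset.filter (fun z => PattLE σ z ∧ z ≠ σ ∧ z ≠ τ)

/-- `τ` covers `σ` in the consecutive pattern poset: `σ < τ` and no element lies
strictly between them. -/
def CoveredBy (σ τ : List ℕ) : Prop :=
  PattLE σ τ ∧ σ ≠ τ ∧ ¬ ∃ ρ, IsPermList ρ ∧ PattLE σ ρ ∧ PattLE ρ τ ∧ ρ ≠ σ ∧ ρ ≠ τ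

/-- `c` is a maximal chain of the interval `[σ,τ]`: it starts at `τ`, ends at `σ`,
and each element covers the next. -/
def IsMaxChainPatt (σ τ : List ℕ) (c : List (List ℕ)) : Prop :=
  c.head? = some τ ∧ c.getLast? = some σ ∧ c.Chain' (fun a b => CoveredBy b a)

def rankIn (s : List ℕ) (x : ℕ) : ℕ := s.countP (· ≤ x)

lemma stdize_eq_map_rankIn (s : List ℕ) : stdize s = s.map (rankIn s) := by
  simp [stdize, rankIn, List.countP_eq_length_filter]

@[simp] lemma length_stdize (s : List ℕ) : (stdize s).length = s.length := by
  simp [stdize]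

lemma rankIn_mono (s : List ℕ) : Monotone (rankIn s) := fun _ _ hxy =>
  List.countP_mono_left fun _ _ h => by simp only [decide_eq_true_eq] at h ⊢; omega

lemma rankIn_lt_rankIn {s : List ℕ} {x y : ℕ} (hx : x ∈ s) (hyx : y < x) :
    rankIn s y < rankIn s x := by
  induction s with
  | nil => cases hx
  | cons a t ih =>
    have hle := rankIn_mono t hyx.le
    simp only [rankIn, List.countP_cons, decide_eq_true_eq] at hle ih ⊢
    rcases List.mem_cons.1 hx with rfl | hx
    · rw [if_neg (by omega), if_pos le_rfl]
      omega
    · have := ih hx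
      split_ifs <;> omega

lemma rankIn_le_rankIn_iff {s : List ℕ} {x y : ℕ} (hy : y ∈ s) :
    rankIn s y ≤ rankIn s x ↔ y ≤ x :=
  ⟨fun h => not_lt.1 fun hxy => (rankIn_lt_rankIn hy hxy).not_ge h, fun h => rankIn_mono s h⟩

lemma stdize_map_of_le_iff {g : ℕ → ℕ} {s : List ℕ}
    (hg : ∀ x ∈ s, ∀ y ∈ s, g y ≤ g x ↔ y ≤ x) : stdize (s.map g) = stdize s := by
  rw [stdize_eq_map_rankIn, stdize_eq_map_rankIn, List.map_map]
  refine List.map_congr_left fun x hx => ?_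
  simp only [Function.comp, rankIn, List.countP_map]
  exact List.countP_congr fun y hy => by simpa using hg x hx y hy

lemma stdize_map_rankIn_of_subset {u s : List ℕ} (hu : u ⊆ s) :
    stdize (u.map (rankIn s)) = stdize u :=
  stdize_map_of_le_iff fun _ _ _ hy => rankIn_le_rankIn_iff (hu hy)

lemma stdize_dropLast_congr {u v : List ℕ} (h : stdize u = stdize v) :
    stdize u.dropLast = stdize v.dropLast := by
  have key (w : List ℕ) : stdize (stdize w).dropLast = stdize w.dropLast := by
    rw [stdize_eq_map_rankIn w, ← List.map_dropLast]
    exact stdize_map_rankIn_of_subset (List.dropLast_sublist w).subset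
  rw [← key u, ← key v, h]

lemma countP_le_range'_one (n x : ℕ) : (List.range' 1 n).countP (· ≤ x) = min n x := by
  induction n with
  | zero => simp
  | succ n ih =>
    rw [List.range'_concat, List.countP_append, ih]
    simp only [List.countP_singleton, decide_eq_true_eq]
    split_ifs <;> omega

lemma IsPermList.nodup {l : List ℕ} (hl : IsPermList l) : l.Nodup :=
  hl.2.nodup_iff.2 List.nodup_range'

lemma IsPermList.stdize_eq {l : List ℕ} (hl : IsPermList l) : stdize l = l := by
  conv_rhs => rw [← List.map_id l]
  rw [stdize_eq_map_rankIn]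
  refine List.map_congr_left fun x hx => ?_
  have hx' := List.mem_range'_1.1 (hl.2.subset hx)
  simp only [rankIn, hl.2.countP_eq, countP_le_range'_one, id]
  omega

lemma isPermList_stdize {w : List ℕ} (hne : w ≠ []) (hnd : w.Nodup) :
    IsPermList (stdize w) := by
  refine ⟨by simpa [stdize_eq_map_rankIn] using hne, ?_⟩
  have hsub : stdize w ⊆ List.range' 1 (stdize w).length := by
    intro r hr
    rw [stdize_eq_map_rankIn] at hr
    obtain ⟨y, hy, rfl⟩ := List.mem_map.1 hr
    have hpos : 0 < rankIn w y := List.countP_pos_iff.2 ⟨y, hy, by simp⟩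
    have hle : rankIn w y ≤ w.length := List.countP_le_length
    exact List.mem_range'_1.2 ⟨hpos, by rw [length_stdize]; omega⟩
  have hnd' : (stdize w).Nodup := by
    rw [stdize_eq_map_rankIn]
    exact hnd.map_on fun x hx y hy hxy => le_antisymm
      ((rankIn_le_rankIn_iff hx).1 hxy.le) ((rankIn_le_rankIn_iff hy).1 hxy.ge)
  exact (hnd'.subperm hsub).perm_of_length_le (by simp)

lemma infix_dropLast_or_infix_tail_of_ne {w t : List ℕ} (h : w <:+: t) (hne : w ≠ t) :
    w <:+: t.dropLast ∨ w <:+: t.tail := by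
  obtain ⟨a, b, rfl⟩ := h
  rcases eq_or_ne b [] with rfl | hb
  · rcases eq_or_ne a [] with rfl | ha
    · simp at hne
    · right
      rw [List.append_nil, List.tail_append_of_ne_nil ha]
      exact (List.suffix_append _ _).isInfix
  · left
    rw [List.dropLast_append_of_ne_nil hb]
    exact List.infix_append _ _ _

lemma prefix_or_infix_tail_of_infix {w t : List ℕ} (h : w <:+: t) : w <+: t ∨ w <:+: t.tail := by
  cases t with
  | nil => exact Or.inl (List.eq_nil_of_infix_nil h ▸ List.nil_prefix)
  | cons a t => exact List.infix_cons_iff.1 h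

lemma suffix_or_infix_dropLast_of_infix {w t : List ℕ} (h : w <:+: t) :
    w <:+ t ∨ w <:+: t.dropLast := by
  rcases eq_or_ne t [] with rfl | ht
  · exact Or.inl (List.eq_nil_of_infix_nil h ▸ List.nil_suffix)
  · rw [← List.dropLast_concat_getLast ht] at h ⊢
    simpa using List.infix_concat_iff.1 h

lemma mem_infixes {w l : List ℕ} : w ∈ infixes l ↔ w <:+: l := by
  simp only [infixes, List.mem_flatMap, List.mem_inits, List.mem_tails]
  rw [List.infix_iff_suffix_prefix]
  exact ⟨fun ⟨t, hp, hs⟩ => ⟨t, hs, hp⟩, fun ⟨t, hs, hp⟩ => ⟨t, hp, hs⟩⟩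

lemma pattLE_iff {z t : List ℕ} : PattLE z t ↔ ∃ w, w <:+: t ∧ stdize w = z := by
  simp only [PattLE, List.mem_map, mem_infixes]

lemma pattLE_stdize_of_infix {w t : List ℕ} (h : w <:+: t) : PattLE (stdize w) t :=
  pattLE_iff.2 ⟨w, h, rfl⟩

lemma pattLE_stdize_self (w : List ℕ) : PattLE (stdize w) w :=
  pattLE_stdize_of_infix (List.infix_refl w)

lemma PattLE.trans_infix {z u v : List ℕ} (hz : PattLE z u) (h : u <:+: v) : PattLE z v := by
  obtain ⟨w, hw, rfl⟩ := pattLE_iff.1 hz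
  exact pattLE_stdize_of_infix (hw.trans h)

lemma pattLE_stdize_iff {z t : List ℕ} : PattLE z (stdize t) ↔ PattLE z t := by
  simp only [pattLE_iff, stdize_eq_map_rankIn t, List.infix_map_iff]
  constructor
  · rintro ⟨_, ⟨u, hu, rfl⟩, rfl⟩
    exact ⟨u, hu, (stdize_map_rankIn_of_subset hu.subset).symm⟩
  · rintro ⟨w, hw, rfl⟩
    exact ⟨_, ⟨w, hw, rfl⟩, stdize_map_rankIn_of_subset hw.subset⟩

lemma PattLE.trans {a b c : List ℕ} (hab : PattLE a b) (hbc : PattLE b c) : PattLE a c := by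
  obtain ⟨u, hu, rfl⟩ := pattLE_iff.1 hbc
  exact (pattLE_stdize_iff.1 hab).trans_infix hu

lemma PattLE.length_le {a b : List ℕ} (h : PattLE a b) : a.length ≤ b.length := by
  obtain ⟨w, hw, rfl⟩ := pattLE_iff.1 h
  simpa using hw.length_le

lemma PattLE.ne_nil {a b : List ℕ} (h : PattLE a b) (ha : a ≠ []) : b ≠ [] := by
  rintro rfl
  simpa [List.length_eq_zero_iff, ha] using h.length_le

lemma PattLE.eq_of_length_le {a b : List ℕ} (h : PattLE a b) (hb : IsPermList b)
    (hl : b.length ≤ a.length) : a = b := by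
  obtain ⟨w, hw, rfl⟩ := pattLE_iff.1 h
  rw [hw.eq_of_length_le (by simpa using hl), hb.stdize_eq]

lemma IsPermList.pattLE_refl {l : List ℕ} (hl : IsPermList l) : PattLE l l := by
  simpa only [hl.stdize_eq] using pattLE_stdize_self l

lemma IsPermList.of_pattLE {z t : List ℕ} (ht : IsPermList t) (h : PattLE z t) (hz : z ≠ []) :
    IsPermList z := by
  obtain ⟨w, hw, rfl⟩ := pattLE_iff.1 h
  exact isPermList_stdize (by rintro rfl; exact hz rfl) (ht.nodup.sublist hw.sublist)

lemma pattLE_dropLast_or_pattLE_tail_of_ne {z t : List ℕ} (h : PattLE z t) (hne : z ≠ stdize t) :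
    PattLE z t.dropLast ∨ PattLE z t.tail := by
  obtain ⟨w, hw, rfl⟩ := pattLE_iff.1 h
  exact (infix_dropLast_or_infix_tail_of_ne hw (by rintro rfl; exact hne rfl)).imp
    pattLE_stdize_of_infix pattLE_stdize_of_infix

lemma extLen_le (τ : List ℕ) : extLen τ ≤ τ.length - 1 := Nat.findGreatest_le _

lemma le_extLen {τ : List ℕ} {k : ℕ} (hk : k ≤ τ.length - 1)
    (h : stdize (τ.take k) = stdize (τ.drop (τ.length - k))) : k ≤ extLen τ :=
  Nat.le_findGreatest hk h

lemma stdize_take_extLen (τ : List ℕ) :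
    stdize (τ.take (extLen τ)) = stdize (τ.drop (τ.length - extLen τ)) :=
  Nat.findGreatest_spec (P := fun k => stdize (τ.take k) = stdize (τ.drop (τ.length - k)))
    (Nat.zero_le _) (by simp)

lemma length_pattExterior (τ : List ℕ) : (pattExterior τ).length = extLen τ := by
  have := extLen_le τ
  rw [pattExterior, length_stdize, List.length_take]
  omega

lemma length_pattInterior (τ : List ℕ) : (pattInterior τ).length = τ.length - 2 := by
  rw [pattInterior, length_stdize, List.length_dropLast, List.length_tail]
  omega

lemma pattExterior_pattLE (τ : List ℕ) : PattLE (pattExterior τ) τ :=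
  pattLE_stdize_of_infix (List.take_prefix _ _).isInfix

/-- An occurrence in `τ.dropLast` avoids the first letter of `τ` or is a prefix of `τ`; one in
`τ.tail` avoids the last letter or is a suffix of `τ`. A prefix and a suffix of `τ` with the same
standardization are at most `extLen τ` long. -/
lemma pattLE_dropLast_and_pattLE_tail_iff {z τ : List ℕ} (hτ : τ ≠ []) :
    PattLE z τ.dropLast ∧ PattLE z τ.tail ↔
      PattLE z τ.tail.dropLast ∨ PattLE z (τ.take (extLen τ)) := by
  have he := extLen_le τ
  have hτlen := List.length_pos_iff.2 hτ
  constructor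
  · rintro ⟨hA, hB⟩
    obtain ⟨w, hw, rfl⟩ := pattLE_iff.1 hA
    rcases prefix_or_infix_tail_of_infix hw with hpre | hw
    swap
    · exact Or.inl (List.tail_dropLast ▸ pattLE_stdize_of_infix hw)
    obtain ⟨w', hw', hww'⟩ := pattLE_iff.1 hB
    rcases suffix_or_infix_dropLast_of_infix hw' with hsuf | hw'
    swap
    · exact Or.inl (hww' ▸ pattLE_stdize_of_infix hw')
    have hlen : w'.length = w.length := by simpa using congrArg List.length hww'
    have hwlen : w.length ≤ τ.length - 1 := by simpa using hpre.length_le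
    have hw_eq : w = τ.take w.length :=
      List.prefix_iff_eq_take.1 (hpre.trans (List.dropLast_prefix τ))
    have hw'_eq : w' = τ.drop (τ.length - w.length) :=
      hlen ▸ List.suffix_iff_eq_drop.1 (hsuf.trans (List.tail_suffix τ))
    have hk : w.length ≤ extLen τ := le_extLen hwlen (by rw [← hw_eq, ← hw'_eq, hww'])
    right
    rw [hw_eq]
    exact pattLE_stdize_of_infix (List.take_prefix_take_left hk).isInfix
  · rintro (h | h)
    · refine ⟨h.trans_infix ?_, h.trans_infix (List.dropLast_prefix _).isInfix⟩
      rw [← List.tail_dropLast]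
      exact (List.tail_suffix _).isInfix
    · refine ⟨h.trans_infix ?_, ?_⟩
      · rw [List.dropLast_eq_take]
        exact (List.take_prefix_take_left he).isInfix
      · rw [← pattLE_stdize_iff, stdize_take_extLen, pattLE_stdize_iff] at h
        refine h.trans_infix ?_
        rw [← List.drop_one]
        exact (List.drop_suffix_drop_left _ (by omega)).isInfix

/-- A proper pattern of the prefix copy of the exterior avoids its first letter or its last one;
in the second case it also occurs in the suffix copy without the last letter of `τ`. -/
lemma PattLE.pattLE_pattInterior {z τ : List ℕ} (hτ : τ ≠ []) (h : PattLE z (pattExterior τ))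
    (hne : z ≠ pattExterior τ) : PattLE z (pattInterior τ) := by
  have he := extLen_le τ
  have hτlen := List.length_pos_iff.2 hτ
  rw [pattExterior, pattLE_stdize_iff] at h
  rw [pattInterior, pattLE_stdize_iff]
  rcases pattLE_dropLast_or_pattLE_tail_of_ne h hne with h | h
  · rw [← pattLE_stdize_iff, stdize_dropLast_congr (stdize_take_extLen τ), pattLE_stdize_iff] at h
    refine h.trans_infix ?_
    rw [List.dropLast_drop_eq_drop_dropLast, ← List.tail_dropLast, ← List.drop_one]
    exact (List.drop_suffix_drop_left _ (by omega)).isInfix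
  · refine h.trans_infix ?_
    rw [List.tail_take_eq_take_tail, List.dropLast_eq_take, List.length_tail]
    exact (List.take_prefix_take_left (by omega)).isInfix

lemma mem_pattInterval {σ t z : List ℕ} :
    z ∈ pattInterval σ t ↔ PattLE z t ∧ PattLE σ z := by
  simp [pattInterval, PattLE]

lemma pattInterval_eq_empty {σ t : List ℕ} (h : ¬ PattLE σ t) : pattInterval σ t = ∅ :=
  Finset.eq_empty_of_forall_notMem fun _ hz =>
    h ((mem_pattInterval.1 hz).2.trans (mem_pattInterval.1 hz).1)

lemma pattInterval_self {σ : List ℕ} (hσ : IsPermList σ) : pattInterval σ σ = {σ} := by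
  ext z
  simp only [mem_pattInterval, Finset.mem_singleton]
  refine ⟨fun ⟨h₁, h₂⟩ => h₁.eq_of_length_le hσ h₂.length_le, ?_⟩
  rintro rfl
  exact ⟨hσ.pattLE_refl, hσ.pattLE_refl⟩

lemma pattInterval_of_length_eq_succ {σ t : List ℕ} (hσ : IsPermList σ) (ht : IsPermList t)
    (hσt : PattLE σ t) (hlen : t.length = σ.length + 1) : pattInterval σ t = {σ, t} := by
  ext z
  simp only [mem_pattInterval, Finset.mem_insert, Finset.mem_singleton]
  constructor
  · rintro ⟨hzt, hσz⟩
    have hz : IsPermList z := ht.of_pattLE hzt (hσz.ne_nil hσ.1)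
    have := hzt.length_le
    rcases Nat.lt_or_ge z.length t.length with hlt | hge
    · exact Or.inl (hσz.eq_of_length_le hz (by omega)).symm
    · exact Or.inr (hzt.eq_of_length_le ht hge)
  · rintro (rfl | rfl)
    exacts [⟨hσt, hσ.pattLE_refl⟩, ⟨ht.pattLE_refl, hσt⟩]

lemma pattInterval_erase_self (σ : List ℕ) {τ : List ℕ} (hτ : IsPermList τ) :
    (pattInterval σ τ).erase τ =
      pattInterval σ (stdize τ.dropLast) ∪ pattInterval σ (stdize τ.tail) := by
  have hτlen := List.length_pos_iff.2 hτ.1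
  ext z
  simp only [Finset.mem_erase, Finset.mem_union, mem_pattInterval, pattLE_stdize_iff]
  constructor
  · rintro ⟨hne, hzτ, hσz⟩
    rcases pattLE_dropLast_or_pattLE_tail_of_ne hzτ (by rwa [hτ.stdize_eq]) with h | h
    exacts [Or.inl ⟨h, hσz⟩, Or.inr ⟨h, hσz⟩]
  · rintro (⟨h, hσz⟩ | ⟨h, hσz⟩)
    · refine ⟨?_, h.trans_infix (List.dropLast_prefix τ).isInfix, hσz⟩
      rintro rfl
      exact absurd h.length_le (by rw [List.length_dropLast]; omega)
    · refine ⟨?_, h.trans_infix (List.tail_suffix τ).isInfix, hσz⟩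
      rintro rfl
      exact absurd h.length_le (by rw [List.length_tail]; omega)

lemma pattInterval_dropLast_inter_tail (σ : List ℕ) {τ : List ℕ} (hτ : τ ≠ []) :
    pattInterval σ (stdize τ.dropLast) ∩ pattInterval σ (stdize τ.tail) =
      pattInterval σ (pattInterior τ) ∪ pattInterval σ (pattExterior τ) := by
  ext z
  simp only [Finset.mem_inter, Finset.mem_union, mem_pattInterval, pattInterior, pattExterior,
    pattLE_stdize_iff]
  rw [← or_and_right, ← pattLE_dropLast_and_pattLE_tail_iff hτ]
  tauto

lemma sum_pattInterval_interior_union_exterior {σ τ : List ℕ} (hτ : τ ≠ []) (f : List ℕ → ℤ) :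
    ∑ z ∈ pattInterval σ (pattInterior τ) ∪ pattInterval σ (pattExterior τ), f z =
      ∑ z ∈ pattInterval σ (pattInterior τ), f z +
        if PattLE σ (pattExterior τ) ∧ ¬ PattLE (pattExterior τ) (pattInterior τ)
        then f (pattExterior τ) else 0 := by
  have hsub : ((pattInterval σ (pattExterior τ)).erase (pattExterior τ)) ⊆
      pattInterval σ (pattInterior τ) := fun z hz => by
    obtain ⟨hne, hz⟩ := Finset.mem_erase.1 hz
    rw [mem_pattInterval] at hz ⊢
    exact ⟨hz.1.pattLE_pattInterior hτ hne, hz.2⟩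
  split_ifs with h
  · have hXmem : pattExterior τ ∈ pattInterval σ (pattExterior τ) :=
      mem_pattInterval.2 ⟨pattLE_stdize_iff.2 (pattLE_stdize_self _), h.1⟩
    have hXnotMem : pattExterior τ ∉ pattInterval σ (pattInterior τ) := fun hX =>
      h.2 (mem_pattInterval.1 hX).1
    rw [← Finset.insert_erase hXmem, Finset.union_insert, Finset.union_eq_left.2 hsub,
      Finset.sum_insert hXnotMem, add_comm]
  · rw [add_zero, Finset.union_eq_left.2]
    intro z hz
    by_cases hzX : z = pattExterior τ
    · rw [hzX, mem_pattInterval] at hz ⊢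
      exact ⟨not_not.1 fun hXM => h ⟨hz.2, hXM⟩, hz.2⟩
    · exact hsub (Finset.mem_erase.2 ⟨hzX, hz⟩)

def IsPattMobius (μ : List ℕ → List ℕ → ℤ) : Prop :=
  ∀ σ τ : List ℕ, IsPermList σ → IsPermList τ → PattLE σ τ →
    ∑ z ∈ pattInterval σ τ, μ σ z = if σ = τ then 1 else 0

namespace IsPattMobius

variable {μ : List ℕ → List ℕ → ℤ} {σ τ : List ℕ}

lemma sum_pattInterval_stdize (hμ : IsPattMobius μ) (hσ : IsPermList σ) {w : List ℕ}
    (hw : w.Nodup) : ∑ z ∈ pattInterval σ (stdize w), μ σ z = if σ = stdize w then 1 else 0 := by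
  by_cases h : PattLE σ (stdize w)
  · have hne : w ≠ [] := by rintro rfl; exact h.ne_nil hσ.1 rfl
    exact hμ σ _ hσ (isPermList_stdize hne hw) h
  · have hne : σ ≠ stdize w := by rintro rfl; exact h hσ.pattLE_refl
    rw [pattInterval_eq_empty h, Finset.sum_empty, if_neg hne]

lemma apply_self (hμ : IsPattMobius μ) (hσ : IsPermList σ) : μ σ σ = 1 := by
  simpa [pattInterval_self hσ] using hμ σ σ hσ hσ hσ.pattLE_refl

lemma apply_of_length_eq_succ (hμ : IsPattMobius μ) (hσ : IsPermList σ) (hτ : IsPermList τ)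
    (hστ : PattLE σ τ) (hlen : τ.length = σ.length + 1) : μ σ τ = -1 := by
  have hne : σ ≠ τ := by rintro rfl; omega
  have h := hμ σ τ hσ hτ hστ
  rw [pattInterval_of_length_eq_succ hσ hτ hστ hlen, Finset.sum_pair hne, if_neg hne,
    hμ.apply_self hσ] at h
  omega

lemma apply_eq_interior_add_exterior (hμ : IsPattMobius μ) (hσ : IsPermList σ)
    (hτ : IsPermList τ) (hστ : PattLE σ τ) (hlen : σ.length + 2 ≤ τ.length) :
    μ σ τ = (if σ = pattInterior τ then 1 else 0) +
      if PattLE σ (pattExterior τ) ∧ ¬ PattLE (pattExterior τ) (pattInterior τ)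
      then μ σ (pattExterior τ) else 0 := by
  have hne {t : List ℕ} (ht : τ.length ≤ t.length + 1) : σ ≠ t := by rintro rfl; omega
  have hsub {w : List ℕ} (hw : w.Sublist τ) : w.Nodup := hτ.nodup.sublist hw
  have hτmem : τ ∈ pattInterval σ τ := mem_pattInterval.2 ⟨hτ.pattLE_refl, hστ⟩
  have hsum := hμ σ τ hσ hτ hστ
  rw [if_neg (hne (by omega)), ← Finset.add_sum_erase _ _ hτmem,
    pattInterval_erase_self σ hτ] at hsum
  have hA := hμ.sum_pattInterval_stdize hσ (hsub (List.dropLast_sublist τ))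
  have hB := hμ.sum_pattInterval_stdize hσ (hsub (List.tail_sublist τ))
  rw [if_neg (hne (by rw [length_stdize, List.length_dropLast]; omega))] at hA
  rw [if_neg (hne (by rw [length_stdize, List.length_tail]; omega))] at hB
  have hM : ∑ z ∈ pattInterval σ (pattInterior τ), μ σ z = if σ = pattInterior τ then 1 else 0 :=
    hμ.sum_pattInterval_stdize hσ (hsub ((List.dropLast_sublist _).trans (List.tail_sublist τ)))
  have hIE := Finset.sum_union_inter (f := μ σ) (s₁ := pattInterval σ (stdize τ.dropLast))
    (s₂ := pattInterval σ (stdize τ.tail))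
  rw [hA, hB, pattInterval_dropLast_inter_tail σ hτ.1,
    sum_pattInterval_interior_union_exterior hτ.1, hM] at hIE
  linarith

lemma apply_mem_or_eq_apply_pattExterior_of_length_add_two_le (hμ : IsPattMobius μ)
    (hσ : IsPermList σ) (hτ : IsPermList τ) (hστ : PattLE σ τ) (hlen : σ.length + 2 ≤ τ.length) :
    (μ σ τ = -1 ∨ μ σ τ = 0 ∨ μ σ τ = 1) ∨
      (μ σ τ = μ σ (pattExterior τ) ∧ IsPermList (pattExterior τ) ∧
        PattLE σ (pattExterior τ) ∧ (pattExterior τ).length < τ.length) := by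
  rw [hμ.apply_eq_interior_add_exterior hσ hτ hστ hlen]
  by_cases hX : PattLE σ (pattExterior τ) ∧ ¬ PattLE (pattExterior τ) (pattInterior τ)
  swap
  · left
    split_ifs <;> simp
  rw [if_pos hX]
  obtain ⟨hσX, hXM⟩ := hX
  have hXperm : IsPermList (pattExterior τ) :=
    hτ.of_pattLE (pattExterior_pattLE τ) (hσX.ne_nil hσ.1)
  have hXlen : (pattExterior τ).length < τ.length := by
    have := extLen_le τ
    rw [length_pattExterior]
    omega
  by_cases hσ_eq_X : σ = pattExterior τ
  · have hσ_ne_M : σ ≠ pattInterior τ := fun h => hXM (hσ_eq_X ▸ h ▸ hσ.pattLE_refl)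
    rw [if_neg hσ_ne_M, ← hσ_eq_X, hμ.apply_self hσ]
    simp
  by_cases hσ_eq_M : σ = pattInterior τ
  · have hcov : (pattExterior τ).length = σ.length + 1 := by
      have := (hσX.eq_of_length_le hXperm).mt hσ_eq_X
      rw [hσ_eq_M, length_pattInterior] at this ⊢
      omega
    rw [if_pos hσ_eq_M, hμ.apply_of_length_eq_succ hσ hXperm hσX hcov]
    simp
  rw [if_neg hσ_eq_M, zero_add]
  exact Or.inr ⟨rfl, hXperm, hσX, hXlen⟩

lemma apply_mem_or_eq_apply_pattExterior (hμ : IsPattMobius μ) (hσ : IsPermList σ)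
    (hτ : IsPermList τ) (hστ : PattLE σ τ) :
    (μ σ τ = -1 ∨ μ σ τ = 0 ∨ μ σ τ = 1) ∨
      (μ σ τ = μ σ (pattExterior τ) ∧ IsPermList (pattExterior τ) ∧
        PattLE σ (pattExterior τ) ∧ (pattExterior τ).length < τ.length) := by
  by_cases heq : σ = τ
  · exact Or.inl (Or.inr (Or.inr (heq ▸ hμ.apply_self hσ)))
  have hlt : σ.length < τ.length :=
    lt_of_le_of_ne hστ.length_le fun h => heq (hστ.eq_of_length_le hτ h.ge)
  obtain hcov | hgap : τ.length = σ.length + 1 ∨ σ.length + 2 ≤ τ.length := by omega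
  · exact Or.inl (Or.inl (hμ.apply_of_length_eq_succ hσ hτ hστ hcov))
  · exact hμ.apply_mem_or_eq_apply_pattExterior_of_length_add_two_le hσ hτ hστ hgap

end IsPattMobius

/-- The Möbius function of the consecutive pattern poset only takes the values
−1, 0, 1.  Here `μ` is any function satisfying the defining recursion of the
Möbius function of this (locally finite) poset. -/
theorem mobius_consecutive_pattern_poset_values
    (μ : List ℕ → List ℕ → ℤ)
    (hμ : ∀ σ τ : List ℕ, IsPermList σ → IsPermList τ → PattLE σ τ →
      ∑ z ∈ pattInterval σ τ, μ σ z = if σ = τ then 1 else 0) :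
    ∀ σ τ : List ℕ, IsPermList σ → IsPermList τ → PattLE σ τ →
      μ σ τ = -1 ∨ μ σ τ = 0 ∨ μ σ τ = 1 := by
  intro σ τ hσ hτ hστ
  induction hn : τ.length using Nat.strong_induction_on generalizing τ with
  | _ n ih =>
    rcases IsPattMobius.apply_mem_or_eq_apply_pattExterior hμ hσ hτ hστ with
      h | ⟨h, hX, hσX, hlen⟩
    · exact h
    · rw [h]
      exact ih _ (hn ▸ hlen) _ hX hσX rfl
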